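/- Let G and x be pregames, and let (G^L, G^R) be a pair consisting of a left option and a right option of G. If the pair (G^L, G^R) satisfies the F1 property, then it is not the case that both G^L + x ≥ 0 and G^R + x ≤ 0. -/

import Mathlib

universe u

namespace SetTheory

/-- The type of pre-games (as in Mathlib of December 2024, since removed from Mathlib). -/
inductive PGame : Type (u + 1)
  | mk : ∀ α β : Type u, (α → PGame) → (β → PGame) → PGame

namespace PGame

/-- The indexing type for allowable moves by Left. -/
def LeftMoves : PGame → Type u
  | mk l _ _ _ => l

/-- The indexing type for allowable moves by Right. -/
def RightMoves : PGame → Type u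
  | mk _ r _ _ => r

/-- The new game after Left makes an allowed move. -/
def moveLeft : ∀ g : PGame, LeftMoves g → PGame
  | mk _l _ L _ => L

/-- The new game after Right makes an allowed move. -/
def moveRight : ∀ g : PGame, RightMoves g → PGame
  | mk _ _r _ R => R

/-- `IsOption x y` means that `x` is either a left or right option for `y`. -/
inductive IsOption : PGame → PGame → Prop
  | moveLeft {x : PGame} (i : x.LeftMoves) : IsOption (x.moveLeft i) x
  | moveRight {x : PGame} (i : x.RightMoves) : IsOption (x.moveRight i) x

theorem wf_isOption : WellFounded IsOption :=
  ⟨fun x => by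
    induction x with
    | mk xl xr xL xR IHl IHr =>
      exact Acc.intro _ fun y h => by
        cases h with
        | moveLeft i => exact IHl i
        | moveRight j => exact IHr j⟩

/-- The less or equal relation on pre-games. -/
instance le : LE PGame :=
  ⟨Sym2.GameAdd.recursion wf_isOption fun x y le =>
      (∀ i, ¬le y (x.moveLeft i) (Sym2.GameAdd.snd_fst <| IsOption.moveLeft i)) ∧
        ∀ j, ¬le (y.moveRight j) x (Sym2.GameAdd.fst_snd <| IsOption.moveRight j)⟩

/-- The pre-game `Zero` is defined by `0 = { | }`. -/
instance : Zero PGame :=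
  ⟨⟨PEmpty, PEmpty, PEmpty.elim, PEmpty.elim⟩⟩

/-- The sum of `x = {xL | xR}` and `y = {yL | yR}` is `{xL + y, x + yL | xR + y, x + yR}`. -/
noncomputable instance : Add PGame.{u} :=
  ⟨fun x y => by
    induction x generalizing y with | mk xl xr _ _ IHxl IHxr => _
    induction y with | mk yl yr yL yR IHyl IHyr => _
    have y := mk yl yr yL yR
    refine ⟨xl ⊕ yl, xr ⊕ yr, Sum.rec ?_ ?_, Sum.rec ?_ ?_⟩
    · exact fun i => IHxl i y
    · exact IHyl
    · exact fun i => IHxr i y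
    · exact IHyr⟩

end PGame

end SetTheory

open SetTheory PGame

/-- A set of pregames is hereditarily closed (HCR) if it is closed under taking
left and right options. -/
def HCR (S : Set PGame) : Prop :=
  ∀ G ∈ S, (∀ i, G.moveLeft i ∈ S) ∧ ∀ j, G.moveRight j ∈ S

/-- The pair `(xL, xR)` satisfies the F1 property if some left option of `xR` is `≥ xL`,
or some right option of `xL` is `≤ xR`. -/
def F1 (xL xR : PGame) : Prop :=
  (∃ i, xL ≤ xR.moveLeft i) ∨ ∃ j, xL.moveRight j ≤ xR

/-- The pair `(xL, xR)` satisfies the F2 property if some right option of `xL` is `≤`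
some left option of `xR`. -/
def F2 (xL xR : PGame) : Prop :=
  ∃ (j : xL.RightMoves) (i : xR.LeftMoves), xL.moveRight j ≤ xR.moveLeft i

theorem pg_le_def {x y : PGame} :
    x ≤ y ↔ (∀ i, ¬ y ≤ x.moveLeft i) ∧ ∀ j, ¬ y.moveRight j ≤ x := by
  unfold LE.le PGame.le
  simp only
  rw [Sym2.GameAdd.recursion_eq]

theorem pg_lf_of_le_moveLeft {x y : PGame} (i : y.LeftMoves) (h : x ≤ y.moveLeft i) :
    ¬ y ≤ x := fun h' => (pg_le_def.1 h').1 i h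

theorem pg_lf_of_moveRight_le {x y : PGame} (j : x.RightMoves) (h : x.moveRight j ≤ y) :
    ¬ y ≤ x := fun h' => (pg_le_def.1 h').2 j h

theorem pg_not_le_iff {x y : PGame} :
    ¬ y ≤ x ↔ (∃ i, x ≤ y.moveLeft i) ∨ ∃ j, x.moveRight j ≤ y := by
  rw [pg_le_def]
  simp only [not_and_or, not_forall, not_not]

theorem pg_le_trans_aux {x y z : PGame}
    (h₁ : ∀ i, y ≤ z → z ≤ x.moveLeft i → y ≤ x.moveLeft i)
    (h₂ : ∀ j, z.moveRight j ≤ x → x ≤ y → z.moveRight j ≤ y) (hxy : x ≤ y) (hyz : y ≤ z) :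
    x ≤ z :=
  pg_le_def.2 ⟨fun i h => (pg_le_def.1 hxy).1 i (h₁ i hyz h),
    fun j h => (pg_le_def.1 hyz).2 j (h₂ j h hxy)⟩

theorem pg_le_trans_all : ∀ x y z : PGame,
    (x ≤ y → y ≤ z → x ≤ z) ∧ (y ≤ z → z ≤ x → y ≤ x) ∧ (z ≤ x → x ≤ y → z ≤ y) := by
  intro x y z
  induction x generalizing y z with | mk _ _ _ _ IHxl IHxr => _
  induction y generalizing z with | mk _ _ _ _ IHyl IHyr => _
  induction z with | mk _ _ _ _ IHzl IHzr => _
  exact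
    ⟨pg_le_trans_aux (fun i => (IHxl i _ _).2.1) fun j => (IHzr j).2.2,
      pg_le_trans_aux (fun i => (IHyl i _).2.2) fun j => (IHxr j _ _).1,
      pg_le_trans_aux (fun i => (IHzl i).1) fun j => (IHyr j _).2.1⟩

theorem pg_le_trans {x y z : PGame} (h₁ : x ≤ y) (h₂ : y ≤ z) : x ≤ z :=
  (pg_le_trans_all x y z).1 h₁ h₂

theorem pg_add_aux (z : PGame) : ∀ x y : PGame,
    (x ≤ y → x + z ≤ y + z) ∧ (¬ y ≤ x → ¬ y + z ≤ x + z) := by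
  induction z with | mk zl zr zL zR IHzl IHzr => _
  intro x y
  induction x generalizing y with | mk xl xr xL xR IHxl IHxr => _
  induction y with | mk yl yr yL yR IHyl IHyr => _
  constructor
  · intro h
    refine pg_le_def.2 ⟨?_, ?_⟩
    · rintro (i | i)
      · exact (IHxl i _).2 ((pg_le_def.1 h).1 i)
      · exact pg_lf_of_le_moveLeft (Sum.inr i) ((IHzl i _ _).1 h)
    · rintro (j | j)
      · exact (IHyr j).2 ((pg_le_def.1 h).2 j)
      · exact pg_lf_of_moveRight_le (Sum.inr j) ((IHzr j _ _).1 h)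
  · intro h
    rcases pg_not_le_iff.1 h with ⟨i, hi⟩ | ⟨j, hj⟩
    · exact pg_lf_of_le_moveLeft (Sum.inl i) ((IHyl i).1 hi)
    · exact pg_lf_of_moveRight_le (Sum.inl j) ((IHxr j _).1 hj)

theorem pg_add_le_add_right {x y : PGame} (h : x ≤ y) (z : PGame) : x + z ≤ y + z :=
  (pg_add_aux z x y).1 h

theorem pg_lf_add_moveLeft {a b c : PGame} (hR : a + b ≤ c) (i : a.LeftMoves) :
    ¬ c ≤ a.moveLeft i + b := by
  obtain ⟨_, _, _, _⟩ := a
  obtain ⟨_, _, _, _⟩ := b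
  exact (pg_le_def.1 hR).1 (Sum.inl i)

theorem pg_lf_add_moveRight {a b c : PGame} (hL : c ≤ a + b) (j : a.RightMoves) :
    ¬ a.moveRight j + b ≤ c := by
  obtain ⟨_, _, _, _⟩ := a
  obtain ⟨_, _, _, _⟩ := b
  exact (pg_le_def.1 hL).2 (Sum.inl j)

theorem stmt_7 (G x : PGame) (i : G.LeftMoves) (j : G.RightMoves)
    (hF1 : F1 (G.moveLeft i) (G.moveRight j)) :
    ¬(0 ≤ G.moveLeft i + x ∧ G.moveRight j + x ≤ 0) := by
  rintro ⟨hL, hR⟩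
  rcases hF1 with ⟨k, hk⟩ | ⟨k, hk⟩
  · have h1 : ¬ 0 ≤ (G.moveRight j).moveLeft k + x := pg_lf_add_moveLeft hR k
    have h2 : 0 ≤ (G.moveRight j).moveLeft k + x :=
      pg_le_trans hL (pg_add_le_add_right hk x)
    exact h1 h2
  · have h1 : ¬ (G.moveLeft i).moveRight k + x ≤ 0 := pg_lf_add_moveRight hL k
    have h2 : (G.moveLeft i).moveRight k + x ≤ 0 :=
      pg_le_trans (pg_add_le_add_right hk x) hR
    exact h1 h2
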